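/- Let T be an ORB-tree topology and f : I → [0,∞) a function on internal nodes that is decreasing (f(u) ≥ f(v) whenever u is an ancestor of v) and strictly positive at the fringe (f(u) > 0 whenever u is the parent of a leaf). Then there exists a branch length function ℓ : E → [0,∞), strictly positive on leaf-adjacent edges, such that the resulting tree is trace-balanced with ℓ*(v,i) = f(v) for all v ∈ I and i ∈ L(v); consequently the spectrum of the covariance matrix equals f(I), with the multiplicity of λ equal to |f^{−1}({λ})|. -/

import Mathlib

open Finset

noncomputable section
open scoped Classical

/-- A finite rooted tree on vertices `Fin n`, given by a parent function:
every vertex reaches the root by iterating `parent`, and the root is its own parent. -/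
structure RTree where
  n : ℕ
  npos : 0 < n
  root : Fin n
  parent : Fin n → Fin n
  parent_root : parent root = root
  reach : ∀ v, ∃ k, parent^[k] v = root

namespace RTree

variable (T : RTree)

/-- `u` is an ancestor of `v` (every vertex is an ancestor of itself). -/
def Anc (u v : Fin T.n) : Prop := ∃ k, T.parent^[k] v = u

/-- The children of a vertex. -/
def children (v : Fin T.n) : Finset (Fin T.n) :=
  Finset.univ.filter fun u => T.parent u = v ∧ u ≠ T.root

def IsLeaf (v : Fin T.n) : Prop := T.children v = ∅

/-- The leaf set of the tree. -/
def leaves : Finset (Fin T.n) := Finset.univ.filter fun v => T.IsLeaf v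

/-- The internal (non-leaf) vertices; the root is internal. -/
def internal : Finset (Fin T.n) := Finset.univ.filter fun v => ¬ T.IsLeaf v

/-- `L(v)`: the leaves descending from `v`. -/
def Ldesc (v : Fin T.n) : Finset (Fin T.n) := T.leaves.filter fun i => T.Anc v i

/-- Depth of a vertex: number of edges to the root. -/
def depth (v : Fin T.n) : ℕ := Nat.find (T.reach v)

/-- Number of vertices of the subtree rooted at `v`. -/
def subtreeSize (v : Fin T.n) : ℕ := (Finset.univ.filter fun u => T.Anc v u).card

/-- ORB-tree: the root has exactly one child and is not a leaf, and every other
internal vertex has exactly two children (so every vertex has degree 1 or 3). -/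
def IsORB : Prop :=
  ¬ T.IsLeaf T.root ∧ (T.children T.root).card = 1 ∧
  ∀ v, ¬ T.IsLeaf v → v ≠ T.root → (T.children v).card = 2

/-- The type of leaves. -/
abbrev Leaf := {i // i ∈ T.leaves}

/-- `δ_e` for the edge `e` above vertex `v`: the indicator vector of the leaves
descending from that edge. -/
def delta (v : Fin T.n) : T.Leaf → ℝ := fun i => if T.Anc v i.1 then 1 else 0

/-- The covariance matrix of the tree with branch lengths `ℓ`
(`ℓ v` is the length of the edge joining `v` to its parent):
`S = ∑_{e ∈ E} ℓ(e) δ_e δ_e'`.  Equivalently `S(i,j) = ∑_{e ∈ [i∧j,∘]} ℓ(e)`. -/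
def cov (ℓ : Fin T.n → ℝ) : Matrix T.Leaf T.Leaf ℝ :=
  ∑ v ∈ Finset.univ.filter (fun v => v ≠ T.root),
    ℓ v • Matrix.vecMulVec (T.delta v) (T.delta v)

/-- The trace branch length `ℓ*(i,v) = ∑_{e ∈ [i,v]} |L(e)| ℓ(e)`; the edge above `w`
lies on the path between `i` and `v` iff exactly one of `i`, `v` descends from `w`. -/
def lstar (ℓ : Fin T.n → ℝ) (i v : Fin T.n) : ℝ :=
  ∑ w ∈ Finset.univ.filter (fun w => w ≠ T.root ∧
      ((T.Anc w i ∧ ¬ T.Anc w v) ∨ (T.Anc w v ∧ ¬ T.Anc w i))),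
    ((T.Ldesc w).card : ℝ) * ℓ w

/-- `φ` is the family of Haar-like wavelets of `T`, indexed by internal vertices. -/
def IsHaarLike (φ : Fin T.n → T.Leaf → ℝ) : Prop :=
  (∀ i, φ T.root i = 1 / Real.sqrt ((T.leaves.card : ℝ))) ∧
  ∀ v ∈ T.internal, v ≠ T.root → ∃ c₀ c₁, c₀ ≠ c₁ ∧ T.children v = {c₀, c₁} ∧
    ∀ i : T.Leaf, φ v i =
      if i.1 ∈ T.Ldesc c₀ then
        Real.sqrt (((T.Ldesc c₁).card : ℝ) / (((T.Ldesc c₀).card : ℝ) * ((T.Ldesc v).card : ℝ)))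
      else if i.1 ∈ T.Ldesc c₁ then
        - Real.sqrt (((T.Ldesc c₀).card : ℝ) / (((T.Ldesc c₁).card : ℝ) * ((T.Ldesc v).card : ℝ)))
      else 0

/-- `T` is trace-balanced (at every non-root internal vertex). -/
def TraceBalanced (ℓ : Fin T.n → ℝ) : Prop :=
  ∀ v ∈ T.internal, v ≠ T.root → ∀ i ∈ T.Ldesc v, ∀ j ∈ T.Ldesc v,
    T.lstar ℓ i v = T.lstar ℓ j v

end RTree

/-!
Let `F` be `f` on internal vertices and `0` on leaves, and give the edge above `v` the length
`(F (parent v) - F v) / |L(v)|`. Along the path from a leaf `i` up to `u`, the trace length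
`ℓ*(i, u)` then telescopes to `F u - F i`, which is `f u` for internal `u`; monotonicity and
fringe positivity of `f` make the lengths nonnegative, and positive above leaves.

For the spectrum, take the Haar-like wavelets unnormalised: `φ_v` is `1` at the root, and for
the two children `c, c'` of any other internal vertex `v` it is `|L(c')|` on `L(c)`, `-|L(c)|`
on `L(c')` and `0` elsewhere. Thus `φ_v` is supported on `L(v)`, constant on `L(w)` for every
strict descendant `w` of `v`, and sums to zero over `L(v)` unless `v` is the root. Expanding
`S = ∑_e ℓ(e) δ_e δ_eᵀ`, the only edges contributing to `(S φ_v)(i)` are those between `i` and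
`v`, each with `|L(e)| ℓ(e) φ_v(i)`; hence `S φ_v = ℓ*(·, v) φ_v = f(v) φ_v`. The wavelets are
nonzero and pairwise orthogonal, and an ORB-tree has `|I| = |L|` of them, so they diagonalise `S`.
-/

open Matrix Polynomial

namespace Matrix

variable {ι : Type*} [Fintype ι] [DecidableEq ι]

theorem eq_units_conj_of_mul_eq_mul_diagonal {R : Type*} [CommRing R] {M V : Matrix ι ι R}
    {d : ι → R} (hV : IsUnit V) (h : M * V = V * diagonal d) :
    M = (hV.unit : Matrix ι ι R) * diagonal d * ((hV.unit⁻¹ : (Matrix ι ι R)ˣ) :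
      Matrix ι ι R) :=
  (Units.eq_mul_inv_iff_mul_eq _).mpr h

theorem charpoly_eq_prod_of_mul_eq_mul_diagonal {R : Type*} [CommRing R] {M V : Matrix ι ι R}
    {d : ι → R} (hV : IsUnit V) (h : M * V = V * diagonal d) :
    M.charpoly = ∏ i, (X - C (d i)) := by
  rw [eq_units_conj_of_mul_eq_mul_diagonal hV h, coe_units_inv, charpoly_units_conj,
    charpoly_diagonal]

theorem spectrum_eq_range_of_mul_eq_mul_diagonal {K : Type*} [Field K] {M V : Matrix ι ι K}
    {d : ι → K} (hV : IsUnit V) (h : M * V = V * diagonal d) :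
    spectrum K M = Set.range d := by
  rw [eq_units_conj_of_mul_eq_mul_diagonal hV h, spectrum.units_conjugate, spectrum_diagonal]

theorem isUnit_of_transpose_mul_eq_diagonal {K : Type*} [Field K] {V : Matrix ι ι K}
    {d : ι → K} (h : Vᵀ * V = diagonal d) (hd : ∀ i, d i ≠ 0) : IsUnit V := by
  have hdet : Vᵀ.det * V.det ≠ 0 := by
    rw [← det_mul, h, det_diagonal]
    exact Finset.prod_ne_zero_iff.mpr fun i _ => hd i
  exact (isUnit_iff_isUnit_det V).mpr (isUnit_iff_ne_zero.mpr (right_ne_zero_of_mul hdet))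

theorem charpoly_eq_prod_and_spectrum_eq_range_of_orthogonal_eigenvectors
    {κ : Type*} [Fintype κ] {M : Matrix ι ι ℝ} (u : κ → ι → ℝ) (d : κ → ℝ)
    (hcard : Fintype.card ι = Fintype.card κ) (horth : Pairwise fun a b => u a ⬝ᵥ u b = 0)
    (hne : ∀ a, u a ≠ 0) (heig : ∀ a, M *ᵥ u a = d a • u a) :
    M.charpoly = ∏ a, (X - C (d a)) ∧ spectrum ℝ M = Set.range d := by
  let e : ι ≃ κ := Fintype.equivOfCardEq hcard
  let V : Matrix ι ι ℝ := of fun i j => u (e j) i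
  have hVV : Vᵀ * V = diagonal fun j => u (e j) ⬝ᵥ u (e j) := by
    ext j k
    change u (e j) ⬝ᵥ u (e k) = _
    rcases eq_or_ne j k with rfl | hjk
    · rw [diagonal_apply_eq]
    · rw [diagonal_apply_ne _ hjk, horth (e.injective.ne hjk)]
  have hMV : M * V = V * diagonal (d ∘ e) := by
    ext i j
    change (M *ᵥ u (e j)) i = _
    rw [heig, mul_diagonal]
    exact mul_comm _ _
  have hV : IsUnit V :=
    isUnit_of_transpose_mul_eq_diagonal hVV fun j => dotProduct_self_eq_zero.not.mpr (hne _)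
  refine ⟨?_, ?_⟩
  · rw [charpoly_eq_prod_of_mul_eq_mul_diagonal hV hMV]
    exact e.prod_comp fun a => X - C (d a)
  · rw [spectrum_eq_range_of_mul_eq_mul_diagonal hV hMV, e.surjective.range_comp]

end Matrix

namespace RTree

variable {T : RTree}

theorem anc_refl (v : Fin T.n) : T.Anc v v := ⟨0, rfl⟩

theorem anc_root (v : Fin T.n) : T.Anc T.root v := T.reach v

theorem anc_parent_self (v : Fin T.n) : T.Anc (T.parent v) v := ⟨1, rfl⟩

theorem Anc.trans {u v w : Fin T.n} (huv : T.Anc u v) (hvw : T.Anc v w) : T.Anc u w := by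
  obtain ⟨k, rfl⟩ := huv
  obtain ⟨m, rfl⟩ := hvw
  exact ⟨k + m, Function.iterate_add_apply _ _ _ _⟩

theorem eq_root_of_iterate_eq_self {v : Fin T.n} {m : ℕ} (hm : 0 < m)
    (h : T.parent^[m] v = v) : v = T.root := by
  obtain ⟨k, hk⟩ := T.reach v
  have hfix := Function.iterate_fixed T.parent_root
  rw [← (Function.IsPeriodicPt.mul_const h k).eq,
    ← Nat.sub_add_cancel (Nat.le_mul_of_pos_left k hm), Function.iterate_add_apply, hk, hfix]

theorem eq_root_of_anc_root {v : Fin T.n} (h : T.Anc v T.root) : v = T.root := by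
  obtain ⟨k, rfl⟩ := h
  exact Function.iterate_fixed T.parent_root k

theorem not_anc_parent {v : Fin T.n} (hv : v ≠ T.root) : ¬ T.Anc v (T.parent v) := by
  rintro ⟨k, hk⟩
  exact hv (eq_root_of_iterate_eq_self k.succ_pos hk)

theorem anc_total_of_anc {u v w : Fin T.n} (hu : T.Anc u w) (hv : T.Anc v w) :
    T.Anc u v ∨ T.Anc v u := by
  obtain ⟨a, rfl⟩ := hu
  obtain ⟨b, rfl⟩ := hv
  rcases le_total a b with h | h
  · exact .inr ⟨b - a, by rw [← Function.iterate_add_apply, Nat.sub_add_cancel h]⟩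
  · exact .inl ⟨a - b, by rw [← Function.iterate_add_apply, Nat.sub_add_cancel h]⟩

theorem mem_children {u v : Fin T.n} : u ∈ T.children v ↔ T.parent u = v ∧ u ≠ T.root := by
  simp [children]

theorem anc_of_mem_children {u v : Fin T.n} (h : u ∈ T.children v) : T.Anc v u :=
  ⟨1, (mem_children.mp h).1⟩

theorem anc_parent_of_anc {u v : Fin T.n} (h : T.Anc u v) (hne : u ≠ v) :
    T.Anc u (T.parent v) := by
  obtain ⟨_ | k, rfl⟩ := h
  · exact absurd rfl hne
  · exact ⟨k, rfl⟩

theorem exists_mem_children_anc {v w : Fin T.n} (h : T.Anc v w) (hne : v ≠ w) :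
    ∃ c ∈ T.children v, T.Anc c w := by
  obtain ⟨k, hk⟩ := h
  induction k generalizing v with
  | zero => exact absurd hk.symm hne
  | succ k ih =>
    rw [Function.iterate_succ_apply'] at hk
    by_cases hr : T.parent^[k] w = T.root
    · rw [hr, T.parent_root] at hk
      exact ih hne (hr.trans hk)
    · exact ⟨_, mem_children.mpr ⟨hk, hr⟩, k, rfl⟩

theorem eq_of_mem_children_of_anc {u u' v : Fin T.n} (hu : u ∈ T.children v)
    (hu' : u' ∈ T.children v) (h : T.Anc u u') : u = u' := by
  by_contra hne
  have huv : T.Anc u (T.parent u') := anc_parent_of_anc h hne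
  rw [(mem_children.mp hu').1, ← (mem_children.mp hu).1] at huv
  exact not_anc_parent (mem_children.mp hu).2 huv

theorem anc_iff_eq_of_mem_children {v c c' i : Fin T.n} (hc : c ∈ T.children v)
    (hc' : c' ∈ T.children v) (hc'i : T.Anc c' i) : T.Anc c i ↔ c = c' := by
  refine ⟨fun hci => ?_, fun h => h ▸ hc'i⟩
  rcases anc_total_of_anc hci hc'i with h | h
  · exact eq_of_mem_children_of_anc hc hc' h
  · exact (eq_of_mem_children_of_anc hc' hc h).symm

theorem not_isLeaf_iff {v : Fin T.n} : ¬ T.IsLeaf v ↔ (T.children v).Nonempty := by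
  rw [IsLeaf, Finset.nonempty_iff_ne_empty]

theorem mem_leaves {v : Fin T.n} : v ∈ T.leaves ↔ T.IsLeaf v := by simp [leaves]

theorem mem_internal {v : Fin T.n} : v ∈ T.internal ↔ ¬ T.IsLeaf v := by simp [internal]

theorem mem_Ldesc {v i : Fin T.n} : i ∈ T.Ldesc v ↔ i ∈ T.leaves ∧ T.Anc v i := by
  simp [Ldesc]

theorem not_isLeaf_parent {v : Fin T.n} (hv : v ≠ T.root) : ¬ T.IsLeaf (T.parent v) :=
  not_isLeaf_iff.mpr ⟨v, mem_children.mpr ⟨rfl, hv⟩⟩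

theorem IsLeaf.eq_of_anc {v w : Fin T.n} (hv : T.IsLeaf v) (h : T.Anc v w) : w = v := by
  by_contra hne
  obtain ⟨c, hc, -⟩ := exists_mem_children_anc h (Ne.symm hne)
  exact not_isLeaf_iff.mpr ⟨c, hc⟩ hv

theorem Ldesc_subset_of_anc {v w : Fin T.n} (h : T.Anc v w) : T.Ldesc w ⊆ T.Ldesc v :=
  fun _ hi => mem_Ldesc.mpr ⟨(mem_Ldesc.mp hi).1, h.trans (mem_Ldesc.mp hi).2⟩

theorem Ldesc_filter_anc {v w : Fin T.n} (h : T.Anc v w) :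
    (T.Ldesc v).filter (T.Anc w) = T.Ldesc w := by
  ext i
  simp only [Finset.mem_filter, mem_Ldesc]
  exact ⟨fun hi => ⟨hi.1.1, hi.2⟩, fun hi => ⟨⟨hi.1, h.trans hi.2⟩, hi.2⟩⟩

theorem Ldesc_of_isLeaf {v : Fin T.n} (hv : T.IsLeaf v) : T.Ldesc v = {v} := by
  ext i
  rw [mem_Ldesc, Finset.mem_singleton]
  refine ⟨fun h => hv.eq_of_anc h.2, ?_⟩
  rintro rfl
  exact ⟨mem_leaves.mpr hv, anc_refl i⟩

theorem subtreeSize_lt_of_mem_children {c v : Fin T.n} (hc : c ∈ T.children v) :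
    T.subtreeSize c < T.subtreeSize v := by
  refine Finset.card_lt_card ⟨fun u hu => ?_, fun hsub => ?_⟩
  · simp only [Finset.mem_filter, Finset.mem_univ, true_and] at hu ⊢
    exact (anc_of_mem_children hc).trans hu
  · have hcv : T.Anc c v := by simpa using hsub (by simp [anc_refl] : v ∈ _)
    obtain ⟨hcv', hcr⟩ := mem_children.mp hc
    exact not_anc_parent hcr (hcv'.symm ▸ hcv)

theorem Ldesc_nonempty (v : Fin T.n) : (T.Ldesc v).Nonempty := by
  by_cases hv : T.IsLeaf v
  · exact ⟨v, by simp [Ldesc_of_isLeaf hv]⟩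
  · obtain ⟨c, hc⟩ := not_isLeaf_iff.mp hv
    exact (Ldesc_nonempty c).mono (Ldesc_subset_of_anc (anc_of_mem_children hc))
termination_by T.subtreeSize v
decreasing_by exact subtreeSize_lt_of_mem_children hc

theorem card_Ldesc_pos (v : Fin T.n) : (0 : ℝ) < (T.Ldesc v).card :=
  Nat.cast_pos.mpr (Ldesc_nonempty v).card_pos

theorem sum_card_children : ∑ v, (T.children v).card = T.n - 1 := by
  have hfib := Finset.card_eq_sum_card_fiberwise (s := Finset.univ.erase T.root)
    (t := Finset.univ) (f := T.parent) fun _ _ => Finset.mem_univ _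
  rw [Finset.card_erase_of_mem (Finset.mem_univ _), Finset.card_univ, Fintype.card_fin] at hfib
  rw [hfib]
  refine Finset.sum_congr rfl fun v _ => congrArg Finset.card ?_
  ext u
  simp [children, and_comm]

theorem IsORB.card_internal (hT : T.IsORB) : T.internal.card = T.leaves.card := by
  have hroot : T.root ∈ T.internal := mem_internal.mpr hT.1
  have hsplit : T.internal.card + T.leaves.card = T.n := by
    simpa [internal, leaves] using Finset.card_filter_add_card_filter_not
      (s := (Finset.univ : Finset (Fin T.n))) fun v => ¬ T.IsLeaf v
  have hleaves : ∑ v ∈ T.leaves, (T.children v).card = 0 :=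
    Finset.sum_eq_zero fun v hv => by
      rw [(mem_leaves.mp hv : T.children v = ∅), Finset.card_empty]
  have hinternal : ∑ v ∈ T.internal, (T.children v).card = 1 + 2 * (T.internal.card - 1) := by
    rw [← Finset.add_sum_erase _ _ hroot, hT.2.1, Finset.sum_congr rfl (g := fun _ => 2),
      Finset.sum_const, smul_eq_mul, Finset.card_erase_of_mem hroot, mul_comm]
    intro v hv
    rw [Finset.mem_erase, mem_internal] at hv
    exact hT.2.2 v hv.2 hv.1
  have htotal := (sum_card_children (T := T)).symm
  rw [← Finset.sum_filter_add_sum_filter_not Finset.univ fun v => ¬ T.IsLeaf v] at htotal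
  simp only [not_not] at htotal
  change T.n - 1 = ∑ v ∈ T.internal, _ + ∑ v ∈ T.leaves, _ at htotal
  have := Finset.card_pos.mpr ⟨_, hroot⟩
  omega

theorem lstar_of_anc (ℓ : Fin T.n → ℝ) {i v : Fin T.n} (h : T.Anc v i) :
    T.lstar ℓ i v
      = ∑ w ∈ Finset.univ.filter fun w => w ≠ T.root ∧ T.Anc w i ∧ ¬ T.Anc w v,
          ((T.Ldesc w).card : ℝ) * ℓ w := by
  refine Finset.sum_congr (Finset.filter_congr fun w _ => ?_) fun _ _ => rfl
  exact and_congr_right fun _ => or_iff_left fun hw => hw.2 (hw.1.trans h)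

theorem lstar_self (ℓ : Fin T.n → ℝ) (i : Fin T.n) : T.lstar ℓ i i = 0 := by
  rw [lstar_of_anc ℓ (anc_refl i)]
  refine Finset.sum_eq_zero fun w hw => ?_
  obtain ⟨-, -, hwi, hnwi⟩ := Finset.mem_filter.mp hw
  exact absurd hwi hnwi

theorem lstar_parent (ℓ : Fin T.n → ℝ) {i v : Fin T.n} (h : T.Anc v i) (hv : v ≠ T.root) :
    T.lstar ℓ i (T.parent v) = T.lstar ℓ i v + (T.Ldesc v).card * ℓ v := by
  have hpath : Finset.univ.filter (fun w => w ≠ T.root ∧ T.Anc w i ∧ ¬ T.Anc w (T.parent v))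
      = insert v (Finset.univ.filter fun w => w ≠ T.root ∧ T.Anc w i ∧ ¬ T.Anc w v) := by
    ext w
    simp only [Finset.mem_filter, Finset.mem_univ, true_and, Finset.mem_insert]
    constructor
    · rintro ⟨hw, hwi, hwp⟩
      by_cases hwv : w = v
      · exact .inl hwv
      · exact .inr ⟨hw, hwi, fun h' => hwp (anc_parent_of_anc h' hwv)⟩
    · rintro (rfl | ⟨hw, hwi, hwv⟩)
      · exact ⟨hv, h, not_anc_parent hv⟩
      · exact ⟨hw, hwi, fun h' => hwv (h'.trans (anc_parent_self v))⟩
  rw [lstar_of_anc ℓ h, lstar_of_anc ℓ ((anc_parent_self v).trans h), hpath,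
    Finset.sum_insert (by simp [anc_refl]), add_comm]

def branchLength (F : Fin T.n → ℝ) (v : Fin T.n) : ℝ :=
  if v = T.root then 0 else (F (T.parent v) - F v) / (T.Ldesc v).card

theorem lstar_branchLength (F : Fin T.n → ℝ) {i u : Fin T.n} (h : T.Anc u i) :
    T.lstar (branchLength F) i u = F u - F i := by
  obtain ⟨k, rfl⟩ := h
  induction k with
  | zero => rw [Function.iterate_zero_apply, lstar_self, sub_self]
  | succ k ih =>
    rw [Function.iterate_succ_apply']
    by_cases hr : T.parent^[k] i = T.root
    · rwa [hr, T.parent_root, ← hr]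
    · rw [lstar_parent _ ⟨k, rfl⟩ hr, ih, branchLength, if_neg hr,
        mul_div_cancel₀ _ (card_Ldesc_pos _).ne']
      ring

theorem branchLength_nonneg {F : Fin T.n → ℝ}
    (hF : ∀ v, v ≠ T.root → F v ≤ F (T.parent v)) (v : Fin T.n) :
    0 ≤ branchLength F v := by
  unfold branchLength
  split_ifs with hv
  · exact le_rfl
  · exact div_nonneg (sub_nonneg.mpr (hF v hv)) (card_Ldesc_pos v).le

theorem branchLength_pos {F : Fin T.n → ℝ} {v : Fin T.n} (hv : v ≠ T.root)
    (hF : F v < F (T.parent v)) : 0 < branchLength F v := by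
  rw [branchLength, if_neg hv]
  exact div_pos (sub_pos.mpr hF) (card_Ldesc_pos v)

theorem exists_branchLength_lstar_eq (hroot : ¬ T.IsLeaf T.root) (f : Fin T.n → ℝ)
    (hdec : ∀ u ∈ T.internal, ∀ v ∈ T.internal, T.Anc u v → f v ≤ f u)
    (hfringe : ∀ u, (∃ i ∈ T.children u, T.IsLeaf i) → 0 < f u) :
    ∃ ℓ : Fin T.n → ℝ, (∀ v, 0 ≤ ℓ v) ∧ (∀ v, T.IsLeaf v → 0 < ℓ v) ∧
      ∀ v ∈ T.internal, ∀ i ∈ T.Ldesc v, T.lstar ℓ i v = f v := by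
  let F : Fin T.n → ℝ := fun v => if T.IsLeaf v then 0 else f v
  have hF_parent (v : Fin T.n) (hv : v ≠ T.root) : F (T.parent v) = f (T.parent v) :=
    if_neg (not_isLeaf_parent hv)
  have hne_root (v : Fin T.n) (hv : T.IsLeaf v) : v ≠ T.root := fun hr => hroot (hr ▸ hv)
  have hF_leaf (v : Fin T.n) (hv : T.IsLeaf v) : F v < F (T.parent v) := by
    rw [hF_parent v (hne_root v hv), show F v = 0 from if_pos hv]
    exact hfringe _ ⟨v, mem_children.mpr ⟨rfl, hne_root v hv⟩, hv⟩
  have hF_mono (v : Fin T.n) (hr : v ≠ T.root) : F v ≤ F (T.parent v) := by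
    by_cases hv : T.IsLeaf v
    · exact (hF_leaf v hv).le
    rw [hF_parent v hr, show F v = f v from if_neg hv]
    exact hdec _ (mem_internal.mpr (not_isLeaf_parent hr)) v (mem_internal.mpr hv)
      (anc_parent_self v)
  refine ⟨branchLength F, branchLength_nonneg hF_mono,
    fun v hv => branchLength_pos (hne_root v hv) (hF_leaf v hv), fun v hv i hi => ?_⟩
  rw [lstar_branchLength F (mem_Ldesc.mp hi).2]
  simp [F, mem_internal.mp hv, mem_leaves.mp (mem_Ldesc.mp hi).1]

theorem delta_dotProduct (w : Fin T.n) (φ : Fin T.n → ℝ) :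
    T.delta w ⬝ᵥ (fun i : T.Leaf => φ i) = ∑ i ∈ T.Ldesc w, φ i := by
  rw [Ldesc, Finset.sum_filter, ← Finset.sum_coe_sort T.leaves]
  exact Finset.sum_congr rfl fun i _ => by rw [delta]; split_ifs <;> simp

theorem cov_mulVec_apply (ℓ : Fin T.n → ℝ) (x : T.Leaf → ℝ) (i : T.Leaf) :
    (T.cov ℓ *ᵥ x) i =
      ∑ w ∈ Finset.univ.filter (· ≠ T.root),
        ℓ w * (T.delta w i * (T.delta w ⬝ᵥ x)) := by
  simp only [cov, sum_mulVec, smul_mulVec, vecMulVec_mulVec, Finset.sum_apply,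
    Pi.smul_apply, smul_eq_mul, op_smul_eq_mul]

structure IsWavelet (v : Fin T.n) (φ : Fin T.n → ℝ) : Prop where
  eq_zero_of_not_anc : ∀ i, ¬ T.Anc v i → φ i = 0
  eq_of_mem_Ldesc :
    ∀ w, T.Anc v w → w ≠ v → ∀ i ∈ T.Ldesc w, ∀ j ∈ T.Ldesc w, φ i = φ j
  sum_Ldesc_eq_zero : v ≠ T.root → ∑ i ∈ T.Ldesc v, φ i = 0

namespace IsWavelet

variable {u v : Fin T.n} {φ ψ : Fin T.n → ℝ}

theorem sum_Ldesc_of_anc (hφ : T.IsWavelet v φ) {w : Fin T.n} (hw : w ≠ T.root)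
    (hwv : T.Anc w v) : ∑ i ∈ T.Ldesc w, φ i = 0 := by
  have hv : v ≠ T.root := fun hv => hw (eq_root_of_anc_root (hv ▸ hwv))
  rw [← hφ.sum_Ldesc_eq_zero hv]
  refine (Finset.sum_subset (Ldesc_subset_of_anc hwv) fun i hiw hiv => ?_).symm
  exact hφ.eq_zero_of_not_anc i fun hvi => hiv (mem_Ldesc.mpr ⟨(mem_Ldesc.mp hiw).1, hvi⟩)

theorem sum_Ldesc_of_not_anc (hφ : T.IsWavelet v φ) {w : Fin T.n} (hwv : ¬ T.Anc w v)
    (hvw : ¬ T.Anc v w) : ∑ i ∈ T.Ldesc w, φ i = 0 := by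
  refine Finset.sum_eq_zero fun i hi => hφ.eq_zero_of_not_anc i fun hvi => ?_
  exact (anc_total_of_anc (mem_Ldesc.mp hi).2 hvi).elim hwv hvw

theorem sum_Ldesc_of_anc_of_ne (hφ : T.IsWavelet v φ) {w i : Fin T.n} (hvw : T.Anc v w)
    (hwv : w ≠ v) (hi : i ∈ T.Ldesc w) :
    ∑ j ∈ T.Ldesc w, φ j = (T.Ldesc w).card * φ i := by
  rw [Finset.sum_congr rfl fun j hj => hφ.eq_of_mem_Ldesc w hvw hwv j hj i hi, Finset.sum_const,
    nsmul_eq_mul]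

theorem delta_mul_sum_Ldesc (hφ : T.IsWavelet v φ) {w : Fin T.n} (hw : w ≠ T.root)
    (i : T.Leaf) : T.delta w i * ∑ j ∈ T.Ldesc w, φ j
      = if T.Anc w i ∧ ¬ T.Anc w v then (T.Ldesc w).card * φ i else 0 := by
  by_cases hwi : T.Anc w i
  swap
  · rw [delta, if_neg hwi, if_neg fun h => hwi h.1, zero_mul]
  rw [delta, if_pos hwi, one_mul]
  by_cases hwv : T.Anc w v
  · rw [if_neg fun h => h.2 hwv, hφ.sum_Ldesc_of_anc hw hwv]
  rw [if_pos ⟨hwi, hwv⟩]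
  by_cases hvw : T.Anc v w
  · exact hφ.sum_Ldesc_of_anc_of_ne hvw (fun h => hwv (h ▸ anc_refl w))
      (mem_Ldesc.mpr ⟨i.2, hwi⟩)
  · have hvi : ¬ T.Anc v i := fun hvi => (anc_total_of_anc hwi hvi).elim hwv hvw
    rw [hφ.sum_Ldesc_of_not_anc hwv hvw, hφ.eq_zero_of_not_anc i hvi, mul_zero]

theorem cov_mulVec (ℓ : Fin T.n → ℝ)
    (hφ : T.IsWavelet v φ) (i : T.Leaf) :
    (T.cov ℓ *ᵥ fun j : T.Leaf => φ j) i = T.lstar ℓ i v * φ i := by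
  have hterm : ∀ w ∈ Finset.univ.filter (· ≠ T.root),
      ℓ w * (T.delta w i * (T.delta w ⬝ᵥ fun j : T.Leaf => φ j))
        = (if T.Anc w i ∧ ¬ T.Anc w v then (T.Ldesc w).card * ℓ w else 0) * φ i := by
    intro w hw
    rw [delta_dotProduct, hφ.delta_mul_sum_Ldesc (Finset.mem_filter.mp hw).2]
    split_ifs <;> ring
  rw [cov_mulVec_apply, Finset.sum_congr rfl hterm, ← Finset.sum_mul, ← Finset.sum_filter,
    Finset.filter_filter]
  by_cases hvi : T.Anc v i
  · rw [lstar_of_anc ℓ hvi]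
  · rw [hφ.eq_zero_of_not_anc i hvi, mul_zero, mul_zero]

theorem sum_leaves_mul_of_anc (hφ : T.IsWavelet u φ) (hψ : T.IsWavelet v ψ) (huv : T.Anc u v)
    (hne : u ≠ v) : ∑ i ∈ T.leaves, φ i * ψ i = 0 := by
  have hv : v ≠ T.root := fun hv => hne ((eq_root_of_anc_root (hv ▸ huv)).trans hv.symm)
  obtain ⟨j, hj⟩ := Ldesc_nonempty v
  rw [← Finset.sum_filter_of_ne fun i _ h => by_contra fun hvi => h (by
      rw [hψ.eq_zero_of_not_anc i hvi, mul_zero])]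
  change ∑ i ∈ T.Ldesc v, φ i * ψ i = 0
  rw [Finset.sum_congr rfl fun i hi => by rw [hφ.eq_of_mem_Ldesc v huv hne.symm i hi j hj],
    ← Finset.mul_sum, hψ.sum_Ldesc_eq_zero hv, mul_zero]

theorem dotProduct_eq_zero (hφ : T.IsWavelet u φ) (hψ : T.IsWavelet v ψ) (hne : u ≠ v) :
    (fun i : T.Leaf => φ i) ⬝ᵥ (fun i : T.Leaf => ψ i) = 0 := by
  change ∑ i : T.Leaf, φ i * ψ i = 0
  rw [Finset.sum_coe_sort T.leaves fun i => φ i * ψ i]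
  by_cases huv : T.Anc u v
  · exact hφ.sum_leaves_mul_of_anc hψ huv hne
  by_cases hvu : T.Anc v u
  · simpa only [mul_comm] using hψ.sum_leaves_mul_of_anc hφ hvu hne.symm
  refine Finset.sum_eq_zero fun i _ => ?_
  by_cases hui : T.Anc u i
  · have hvi : ¬ T.Anc v i := fun hvi => (anc_total_of_anc hui hvi).elim huv hvu
    rw [hψ.eq_zero_of_not_anc i hvi, mul_zero]
  · rw [hφ.eq_zero_of_not_anc i hui, zero_mul]

end IsWavelet

def someChild (v : Fin T.n) : Fin T.n :=
  if h : (T.children v).Nonempty then h.choose else v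

theorem someChild_mem {v : Fin T.n} (hv : ¬ T.IsLeaf v) : T.someChild v ∈ T.children v := by
  rw [someChild, dif_pos (not_isLeaf_iff.mp hv)]
  exact (not_isLeaf_iff.mp hv).choose_spec

/-- Up to normalisation, the Haar-like wavelet of `IsHaarLike`. -/
def haar (v i : Fin T.n) : ℝ :=
  if v = T.root then 1
  else if T.Anc (T.someChild v) i then (T.Ldesc v).card - (T.Ldesc (T.someChild v)).card
  else if T.Anc v i then -(T.Ldesc (T.someChild v)).card
  else 0

theorem isWavelet_haar {v : Fin T.n} (hv : ¬ T.IsLeaf v) : T.IsWavelet v (T.haar v) := by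
  by_cases hr : v = T.root
  · subst hr
    refine ⟨fun i hi => absurd (anc_root i) hi, fun _ _ _ i _ j _ => ?_, fun h => absurd rfl h⟩
    simp [haar]
  have hc := someChild_mem hv
  unfold haar
  simp only [if_neg hr]
  generalize T.someChild v = c at hc ⊢
  have hvc := anc_of_mem_children hc
  refine ⟨fun i hvi => ?_, fun w hvw hwv i hi j hj => ?_, fun _ => ?_⟩
  · rw [if_neg fun hci => hvi (hvc.trans hci), if_neg hvi]
  · obtain ⟨c', hc', hc'w⟩ := exists_mem_children_anc hvw hwv.symm
    have hi' := anc_iff_eq_of_mem_children hc hc' (hc'w.trans (mem_Ldesc.mp hi).2)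
    have hj' := anc_iff_eq_of_mem_children hc hc' (hc'w.trans (mem_Ldesc.mp hj).2)
    simp only [hi', hj', hvw.trans (mem_Ldesc.mp hi).2, hvw.trans (mem_Ldesc.mp hj).2]
  · have hcard : ((T.Ldesc v).filter fun i => ¬ T.Anc c i).card
        = ((T.Ldesc v).card : ℝ) - (T.Ldesc c).card := by
      rw [Finset.filter_not, Finset.card_sdiff_of_subset (Finset.filter_subset _ _),
        Ldesc_filter_anc hvc, Nat.cast_sub (Finset.card_le_card (Ldesc_subset_of_anc hvc))]
    rw [← Finset.sum_filter_add_sum_filter_not _ (T.Anc c), Ldesc_filter_anc hvc,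
      Finset.sum_congr rfl fun i hi => if_pos (mem_Ldesc.mp hi).2,
      Finset.sum_congr (s₁ := (T.Ldesc v).filter _) rfl fun i hi => by
        obtain ⟨hiv, hci⟩ := Finset.mem_filter.mp hi
        rw [if_neg hci, if_pos (mem_Ldesc.mp hiv).2],
      Finset.sum_const, Finset.sum_const, nsmul_eq_mul, nsmul_eq_mul, hcard]
    ring

theorem haar_ne_zero (hT : T.IsORB) {v : Fin T.n} (hv : ¬ T.IsLeaf v) :
    (fun i : T.Leaf => T.haar v i) ≠ 0 := by
  intro h
  by_cases hr : v = T.root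
  · obtain ⟨i, hi⟩ := Ldesc_nonempty v
    simpa [haar, hr] using congrFun h ⟨i, (mem_Ldesc.mp hi).1⟩
  have hc := someChild_mem hv
  obtain ⟨c', hc', hne⟩ := Finset.exists_mem_ne (by rw [hT.2.2 v hv hr]; norm_num)
    (T.someChild v)
  obtain ⟨i, hi⟩ := Ldesc_nonempty c'
  have hci : ¬ T.Anc (T.someChild v) i :=
    fun h => hne ((anc_iff_eq_of_mem_children hc hc' (mem_Ldesc.mp hi).2).mp h).symm
  have := congrFun h ⟨i, (mem_Ldesc.mp hi).1⟩
  simp only [haar, if_neg hr, if_neg hci,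
    if_pos ((anc_of_mem_children hc').trans (mem_Ldesc.mp hi).2), Pi.zero_apply] at this
  exact (card_Ldesc_pos (T.someChild v)).ne' (neg_eq_zero.mp this)

theorem charpoly_cov_and_spectrum_cov (hT : T.IsORB) {ℓ f : Fin T.n → ℝ}
    (hℓ : ∀ v ∈ T.internal, ∀ i ∈ T.Ldesc v, T.lstar ℓ i v = f v) :
    (T.cov ℓ).charpoly = ∏ v ∈ T.internal, (X - C (f v)) ∧
      spectrum ℝ (T.cov ℓ) = f '' {v | v ∈ T.internal} := by
  have heig (v : T.internal) : T.cov ℓ *ᵥ (fun i : T.Leaf => T.haar v i)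
      = f v • fun i : T.Leaf => T.haar v i := by
    have hw := isWavelet_haar (mem_internal.mp v.2)
    ext i
    rw [hw.cov_mulVec, Pi.smul_apply, smul_eq_mul]
    by_cases hvi : T.Anc v i
    · rw [hℓ v v.2 i (mem_Ldesc.mpr ⟨i.2, hvi⟩)]
    · rw [hw.eq_zero_of_not_anc i hvi, mul_zero, mul_zero]
  obtain ⟨hcharpoly, hspectrum⟩ :=
    charpoly_eq_prod_and_spectrum_eq_range_of_orthogonal_eigenvectors
      (fun (v : T.internal) (i : T.Leaf) => T.haar v i) (fun v => f v)
      (by simp [hT.card_internal])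
      (fun u v huv => (isWavelet_haar (mem_internal.mp u.2)).dotProduct_eq_zero
        (isWavelet_haar (mem_internal.mp v.2)) (Subtype.coe_ne_coe.mpr huv))
      (fun v => haar_ne_zero hT (mem_internal.mp v.2)) heig
  refine ⟨?_, ?_⟩
  · rw [hcharpoly, Finset.prod_coe_sort T.internal fun v => X - C (f v)]
  · rw [hspectrum, Set.image_eq_range]
    rfl

end RTree

theorem exists_branchLengths_of_decreasing_general (T : RTree) (hT : T.IsORB)
    (f : Fin T.n → ℝ)
    (hdec : ∀ u ∈ T.internal, ∀ v ∈ T.internal, T.Anc u v → f v ≤ f u)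
    (hfringe : ∀ u, (∃ i ∈ T.children u, T.IsLeaf i) → 0 < f u) :
    ∃ ℓ : Fin T.n → ℝ, (∀ v, 0 ≤ ℓ v) ∧ (∀ v, T.IsLeaf v → 0 < ℓ v) ∧
      (∀ v ∈ T.internal, ∀ i ∈ T.Ldesc v, T.lstar ℓ i v = f v) ∧
      spectrum ℝ (T.cov ℓ) = f '' {v | v ∈ T.internal} ∧
      (T.cov ℓ).charpoly
        = ∏ v ∈ T.internal, (Polynomial.X - Polynomial.C (f v)) := by
  obtain ⟨ℓ, hnonneg, hpos, hlstar⟩ := RTree.exists_branchLength_lstar_eq hT.1 f hdec hfringe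
  obtain ⟨hcharpoly, hspectrum⟩ := RTree.charpoly_cov_and_spectrum_cov hT hlstar
  exact ⟨ℓ, hnonneg, hpos, hlstar, hspectrum, hcharpoly⟩

/-- Given an ORB-tree topology and `f : I → [0,∞)` decreasing along ancestry and
strictly positive at parents of leaves, there are branch lengths `ℓ` (nonnegative,
positive on leaf-adjacent edges) making the tree trace-balanced with
`ℓ*(v,i) = f(v)` for all `v ∈ I`, `i ∈ L(v)`; consequently `σ(S) = f(I)` with the
multiplicity of `λ` equal to `|f⁻¹({λ})|`. -/
theorem exists_branchLengths_of_decreasing (T : RTree) (hT : T.IsORB)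
    (f : Fin T.n → ℝ) (hf0 : ∀ v ∈ T.internal, 0 ≤ f v)
    (hdec : ∀ u ∈ T.internal, ∀ v ∈ T.internal, T.Anc u v → f v ≤ f u)
    (hfringe : ∀ u, (∃ i ∈ T.children u, T.IsLeaf i) → 0 < f u) :
    ∃ ℓ : Fin T.n → ℝ, (∀ v, 0 ≤ ℓ v) ∧ (∀ v, T.IsLeaf v → 0 < ℓ v) ∧
      (∀ v ∈ T.internal, ∀ i ∈ T.Ldesc v, T.lstar ℓ i v = f v) ∧
      spectrum ℝ (T.cov ℓ) = f '' {v | v ∈ T.internal} ∧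
      (T.cov ℓ).charpoly
        = ∏ v ∈ T.internal, (Polynomial.X - Polynomial.C (f v)) :=
  exists_branchLengths_of_decreasing_general T hT f hdec hfringe
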